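/- If C1 and C2 are proper cones, then both C1 ⊙ C2 and C1 ⊛ C2 are proper cones. -/

import Mathlib

open scoped TensorProduct
open TensorProduct

section Defs

variable {V V' V1 V2 : Type*}
  [AddCommGroup V] [Module ℝ V] [AddCommGroup V'] [Module ℝ V']
  [AddCommGroup V1] [Module ℝ V1] [AddCommGroup V2] [Module ℝ V2]

/-- The dual cone of a set `C`: linear functionals nonnegative on `C`. -/
def dualCone (C : Set V) : Set (Module.Dual ℝ V) := {f | ∀ x ∈ C, 0 ≤ f x}

/-- The functional `f ⊗ g` on `V1 ⊗ V2`. -/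
noncomputable def pairTensor (f : Module.Dual ℝ V1) (g : Module.Dual ℝ V2) :
    Module.Dual ℝ (V1 ⊗[ℝ] V2) :=
  (TensorProduct.lid ℝ ℝ).toLinearMap ∘ₗ TensorProduct.map f g

/-- The minimal tensor product of two cones: the convex hull of the product tensors. -/
def minTensor (C1 : Set V1) (C2 : Set V2) : Set (V1 ⊗[ℝ] V2) :=
  convexHull ℝ {z | ∃ x ∈ C1, ∃ y ∈ C2, z = x ⊗ₜ[ℝ] y}

/-- The maximal tensor product of two cones: tensors nonnegative on product functionals. -/
def maxTensor (C1 : Set V1) (C2 : Set V2) : Set (V1 ⊗[ℝ] V2) :=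
  {z | ∀ f ∈ dualCone C1, ∀ g ∈ dualCone C2, 0 ≤ pairTensor f g z}

/-- A cone: a set closed under multiplication by nonnegative scalars. -/
def IsConeSet (C : Set V) : Prop := ∀ x ∈ C, ∀ a : ℝ, 0 ≤ a → a • x ∈ C

/-- Topological closedness of a subset of a finite-dimensional real vector space,
expressed through (all) linear identifications with `Fin n → ℝ`. -/
def IsClosedSet (C : Set V) : Prop := ∀ (n : ℕ) (e : V ≃ₗ[ℝ] (Fin n → ℝ)), IsClosed (e '' C)

/-- A proper cone: convex, closed, salient and generating. -/
def IsProperCone (C : Set V) : Prop :=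
  Convex ℝ C ∧ IsClosedSet C ∧ IsConeSet C ∧ C ∩ (-C) = {0} ∧ Submodule.span ℝ C = ⊤

/-- A classical cone: the set of vectors with nonnegative coordinates in some basis,
i.e. the cone generated by a basis of the space. -/
def IsClassicalCone (C : Set V) : Prop :=
  ∃ (ι : Type) (b : Module.Basis ι ℝ V), C = {x | ∀ i, 0 ≤ b.repr x i}

/-- `C'` is a retract of `C` if there are positive maps `Φ, Ψ` with `Φ ∘ Ψ = id`. -/
def IsRetractOf (C' : Set V') (C : Set V) : Prop :=
  ∃ (Φ : V →ₗ[ℝ] V') (Ψ : V' →ₗ[ℝ] V),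
    (∀ x ∈ C, Φ x ∈ C') ∧ (∀ y ∈ C', Ψ y ∈ C) ∧ Φ ∘ₗ Ψ = LinearMap.id

/-- A polyhedral cone: the conical hull of finitely many vectors. -/
def IsPolyhedralCone (C : Set V) : Prop :=
  ∃ (k : ℕ) (v : Fin k → V),
    C = {x | ∃ c : Fin k → ℝ, (∀ i, 0 ≤ c i) ∧ x = ∑ i, c i • v i}

end Defs

/-!
The maximal tensor product is an intersection of closed half-spaces and contains the minimal
one, which is generating because the products `x ⊗ₜ y` of generators span `V1 ⊗ V2`.
Salience of `maxTensor C1 C2` comes from duality: by the bipolar theorem a closed salient cone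
has a generating dual cone, and the functionals `f ⊗ g`, with `f` and `g` ranging over
generating sets, separate the points of `V1 ⊗ V2`.

Closedness of `minTensor C1 C2` is the real point. Summing a basis of `V*` drawn from the dual
cone gives a functional `φ` that is strictly positive on `C ∖ {0}`, so `C ∩ {φ = 1}` is a
compact base of `C`. Then `minTensor C1 C2` is the cone over the convex hull of the compact set
`{x ⊗ₜ y | φ1 x = 1 = φ2 y}`, which is compact by Carathéodory and lies in the hyperplane
`{φ1 ⊗ φ2 = 1}`; a cone over a compact set in an affine hyperplane missing the origin is closed.
-/

open Set Module
open scoped Pointwise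

section Salient

variable {G : Type*} [AddGroup G]

lemma zero_mem_of_inter_neg_eq {C : Set G} (h : C ∩ -C = {0}) : (0 : G) ∈ C :=
  (h.symm ▸ mem_singleton (0 : G) : (0 : G) ∈ C ∩ -C).1

lemma inter_neg_eq_zero_of_subset {s t : Set G} (hst : s ⊆ t) (ht : t ∩ -t = {0})
    (hs : (0 : G) ∈ s) : s ∩ -s = {0} :=
  subset_antisymm (fun _ hx => ht ▸ ⟨hst hx.1, hst hx.2⟩)
    (singleton_subset_iff.2 ⟨hs, by simpa using hs⟩)

end Salient

section Cones

variable {V W : Type*} [AddCommGroup V] [Module ℝ V] [AddCommGroup W] [Module ℝ W]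

lemma IsConeSet.image {C : Set V} (hC : IsConeSet C) {F : Type*} [FunLike F V W]
    [LinearMapClass F ℝ V W] (f : F) : IsConeSet (f '' C) := by
  rintro _ ⟨x, hx, rfl⟩ a ha
  exact ⟨a • x, hC x hx a ha, map_smul f a x⟩

lemma IsConeSet.convexHull {C : Set V} (hC : IsConeSet C) : IsConeSet (convexHull ℝ C) := by
  intro x hx a ha
  have hsmul : a • _root_.convexHull ℝ C ⊆ _root_.convexHull ℝ C := by
    rw [← convexHull_smul]
    exact convexHull_mono (by rintro _ ⟨y, hy, rfl⟩; exact hC y hy a ha)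
  exact hsmul (smul_mem_smul_set hx)

lemma IsConeSet.add_mem {C : Set V} (hC : IsConeSet C) (hconv : Convex ℝ C) {x y : V}
    (hx : x ∈ C) (hy : y ∈ C) : x + y ∈ C := by
  have hmid := hconv hx hy (by norm_num : (0 : ℝ) ≤ 1 / 2) (by norm_num : (0 : ℝ) ≤ 1 / 2)
    (by norm_num)
  simpa [smul_add, smul_smul] using hC _ hmid 2 (by norm_num)

def IsConeSet.toPointedCone {C : Set V} (hC : IsConeSet C) (hconv : Convex ℝ C)
    (h0 : (0 : V) ∈ C) : PointedCone ℝ V where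
  carrier := C
  add_mem' := hC.add_mem hconv
  zero_mem' := h0
  smul_mem' c _ hx := hC _ hx c c.2

@[simp] lemma IsConeSet.coe_toPointedCone {C : Set V} (hC : IsConeSet C) (hconv : Convex ℝ C)
    (h0 : (0 : V) ∈ C) : (hC.toPointedCone hconv h0 : Set V) = C := rfl

lemma convex_Ici_smul {P : Set V} (hP : Convex ℝ P) : Convex ℝ (Ici (0 : ℝ) • P) := by
  rintro _ ⟨s, hs, p, hp, rfl⟩ _ ⟨t, ht, q, hq, rfl⟩ a b ha hb hab
  have has : 0 ≤ a * s := mul_nonneg ha hs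
  have hbt : 0 ≤ b * t := mul_nonneg hb ht
  rcases (add_nonneg has hbt).eq_or_lt with h | h
  · refine ⟨0, mem_Ici.2 le_rfl, p, hp, ?_⟩
    simp [smul_smul, show a * s = 0 by linarith, show b * t = 0 by linarith]
  · refine ⟨a * s + b * t, h.le, (a * s / (a * s + b * t)) • p + (b * t / (a * s + b * t)) • q,
      hP hp hq (by positivity) (by positivity) (by field_simp), ?_⟩
    simp only [smul_add, smul_smul]
    congr 2 <;> field_simp

lemma convexHull_Ici_smul (Q : Set V) :
    convexHull ℝ (Ici (0 : ℝ) • Q) = Ici (0 : ℝ) • convexHull ℝ Q := by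
  refine subset_antisymm (convexHull_min (smul_subset_smul_left (subset_convexHull ℝ Q))
    (convex_Ici_smul (convex_convexHull ℝ Q))) ?_
  rintro _ ⟨t, ht, q, hq, rfl⟩
  have hmono : convexHull ℝ (t • Q) ⊆ convexHull ℝ (Ici (0 : ℝ) • Q) :=
    convexHull_mono (smul_set_subset_smul ht)
  exact hmono (convexHull_smul t Q ▸ smul_mem_smul_set hq)

end Cones

section StrictlyPositive

variable {V W : Type*} [AddCommGroup V] [Module ℝ V] [AddCommGroup W] [Module ℝ W]

def IsStrictlyPositiveOn (φ : V →ₗ[ℝ] ℝ) (C : Set V) : Prop := ∀ x ∈ C, x ≠ 0 → 0 < φ x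

lemma IsStrictlyPositiveOn.comp_symm {φ : V →ₗ[ℝ] ℝ} {C : Set V}
    (hφ : IsStrictlyPositiveOn φ C) (e : V ≃ₗ[ℝ] W) :
    IsStrictlyPositiveOn (φ ∘ₗ e.symm.toLinearMap) (e '' C) := by
  rintro _ ⟨x, hx, rfl⟩ hne
  simpa using hφ x hx (by rintro rfl; simp at hne)

lemma IsStrictlyPositiveOn.inv_smul_mem {φ : V →ₗ[ℝ] ℝ} {C : Set V}
    (hφ : IsStrictlyPositiveOn φ C) (hC : IsConeSet C) {x : V} (hx : x ∈ C) (hx0 : x ≠ 0) :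
    (φ x)⁻¹ • x ∈ C ∩ φ ⁻¹' {1} :=
  ⟨hC x hx _ (inv_nonneg.2 (hφ x hx hx0).le), by simp [(hφ x hx hx0).ne']⟩

lemma image2_subset_insert_zero_Ici_smul {U : Type*} [AddCommGroup U] [Module ℝ U]
    {K₁ : Set V} {K₂ : Set W} {ψ₁ : V →ₗ[ℝ] ℝ} {ψ₂ : W →ₗ[ℝ] ℝ}
    (hc₁ : IsConeSet K₁) (hc₂ : IsConeSet K₂)
    (hψ₁ : IsStrictlyPositiveOn ψ₁ K₁) (hψ₂ : IsStrictlyPositiveOn ψ₂ K₂)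
    (β : V →ₗ[ℝ] W →ₗ[ℝ] U) :
    image2 (fun x y => β x y) K₁ K₂ ⊆
      insert 0 (Ici (0 : ℝ) • image2 (fun x y => β x y) (K₁ ∩ ψ₁ ⁻¹' {1}) (K₂ ∩ ψ₂ ⁻¹' {1})) := by
  rintro _ ⟨x, hx, y, hy, rfl⟩
  rcases eq_or_ne x 0 with rfl | hx0
  · simp
  rcases eq_or_ne y 0 with rfl | hy0
  · simp
  have hx' := hψ₁ x hx hx0
  have hy' := hψ₂ y hy hy0
  refine Or.inr ⟨ψ₁ x * ψ₂ y, (mul_pos hx' hy').le, _,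
    ⟨_, hψ₁.inv_smul_mem hc₁ hx hx0, _, hψ₂.inv_smul_mem hc₂ hy hy0, rfl⟩, ?_⟩
  simp only [map_smul, LinearMap.smul_apply, smul_smul]
  rw [show ψ₁ x * ψ₂ y * ((ψ₂ y)⁻¹ * (ψ₁ x)⁻¹) = 1 by field_simp, one_smul]

end StrictlyPositive

section Duality

variable {V : Type*} [AddCommGroup V] [Module ℝ V] [FiniteDimensional ℝ V] {C : Set V}

lemma mem_of_forall_dualCone_nonneg (hconv : Convex ℝ C) (hclosed : IsClosedSet C)
    (hC : IsConeSet C) (h0 : (0 : V) ∈ C) {v : V} (hv : ∀ f ∈ dualCone C, 0 ≤ f v) :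
    v ∈ C := by
  by_contra hvC
  let e := (finBasis ℝ V).equivFun
  let K : ProperCone ℝ (Fin (finrank ℝ V) → ℝ) :=
    ⟨(hC.toPointedCone hconv h0).map e.toLinearMap, by simpa using hclosed _ e⟩
  have hK : ∀ y, y ∈ K ↔ y ∈ e '' C := fun y => Iff.rfl
  obtain ⟨f, hfK, hfv⟩ := K.hyperplane_separation_point (x₀ := e v) (by simpa [hK] using hvC)
  have hf : f.toLinearMap ∘ₗ e.toLinearMap ∈ dualCone C := fun x hx =>
    hfK (e x) ((hK _).2 ⟨x, hx, rfl⟩)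
  exact (hv _ hf).not_gt hfv

lemma span_dualCone_eq_top (hconv : Convex ℝ C) (hclosed : IsClosedSet C) (hC : IsConeSet C)
    (hsal : C ∩ -C = {0}) : Submodule.span ℝ (dualCone C) = ⊤ := by
  set D := Submodule.span ℝ (dualCone C)
  suffices D.dualCoannihilator = ⊥ by
    rw [← Subspace.dualCoannihilator_dualAnnihilator_eq (W := D), this,
      Submodule.dualAnnihilator_bot]
  refine eq_bot_iff.2 fun v hv => ?_
  have hvD : ∀ f ∈ dualCone C, f v = 0 := fun f hf =>
    (Submodule.mem_dualCoannihilator v).1 hv f (Submodule.subset_span hf)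
  have h0 := zero_mem_of_inter_neg_eq hsal
  have hvC : v ∈ C ∩ -C :=
    ⟨mem_of_forall_dualCone_nonneg hconv hclosed hC h0 fun f hf => (hvD f hf).ge,
      mem_of_forall_dualCone_nonneg hconv hclosed hC h0 fun f hf => by simp [hvD f hf]⟩
  rwa [hsal] at hvC

lemma exists_isStrictlyPositiveOn (h : Submodule.span ℝ (dualCone C) = ⊤) :
    ∃ φ : Dual ℝ V, IsStrictlyPositiveOn φ C := by
  let b := Basis.ofSpan h.ge
  have := FiniteDimensional.fintypeBasisIndex b
  have hb : ∀ i, b i ∈ dualCone C := fun i => Basis.ofSpan_subset h.ge (mem_range_self i)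
  refine ⟨∑ i, b i, fun x hx hx0 => ?_⟩
  rw [LinearMap.sum_apply]
  refine Finset.sum_pos' (fun i _ => hb i x hx) ?_
  by_contra! hle
  refine hx0 ((forall_dual_apply_eq_zero_iff ℝ x).1 fun φ => ?_)
  have heval : Dual.eval ℝ V x = 0 :=
    b.ext fun i => le_antisymm (hle i (Finset.mem_univ i)) (hb i x hx)
  exact LinearMap.congr_fun heval φ

end Duality

lemma span_image2_tmul_eq_top {R M N : Type*} [CommSemiring R] [AddCommMonoid M] [Module R M]
    [AddCommMonoid N] [Module R N] {s : Set M} {t : Set N} (hs : Submodule.span R s = ⊤)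
    (ht : Submodule.span R t = ⊤) : Submodule.span R (image2 (· ⊗ₜ[R] ·) s t) = ⊤ := by
  rw [← TensorProduct.map₂_mk_top_top_eq_top, ← hs, ← ht, Submodule.map₂_span_span]
  rfl

section Tensor

variable {V1 V2 : Type*} [AddCommGroup V1] [Module ℝ V1] [AddCommGroup V2] [Module ℝ V2]
  {C1 : Set V1} {C2 : Set V2}

@[simp] lemma pairTensor_tmul (f : Dual ℝ V1) (g : Dual ℝ V2) (x : V1) (y : V2) :
    pairTensor f g (x ⊗ₜ y) = f x * g y := by
  simp [pairTensor]

lemma pairTensor_eq_dualDistrib (f : Dual ℝ V1) (g : Dual ℝ V2) :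
    pairTensor f g = dualDistrib ℝ V1 V2 (f ⊗ₜ g) :=
  TensorProduct.ext' fun x y => by simp

lemma eq_zero_of_forall_pairTensor_eq_zero [FiniteDimensional ℝ V1] [FiniteDimensional ℝ V2]
    {S : Set (Dual ℝ V1)} {T : Set (Dual ℝ V2)} (hS : Submodule.span ℝ S = ⊤)
    (hT : Submodule.span ℝ T = ⊤) {z : V1 ⊗[ℝ] V2}
    (hz : ∀ f ∈ S, ∀ g ∈ T, pairTensor f g z = 0) : z = 0 := by
  let u : Dual ℝ V1 ⊗[ℝ] Dual ℝ V2 →ₗ[ℝ] ℝ := Dual.eval ℝ _ z ∘ₗ dualDistrib ℝ V1 V2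
  have hu : u = 0 := by
    refine LinearMap.ext_on (span_image2_tmul_eq_top hS hT) ?_
    rintro _ ⟨f, hf, g, hg, rfl⟩
    simpa [u, pairTensor_eq_dualDistrib] using hz f hf g hg
  refine (forall_dual_apply_eq_zero_iff ℝ z).1 fun F => ?_
  obtain ⟨t, rfl⟩ := (dualDistribEquiv ℝ V1 V2).surjective F
  exact LinearMap.congr_fun hu t

lemma minTensor_eq (C1 : Set V1) (C2 : Set V2) :
    minTensor C1 C2 = convexHull ℝ (image2 (· ⊗ₜ[ℝ] ·) C1 C2) := by
  simp only [minTensor, image2, eq_comm]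

lemma zero_mem_minTensor (h1 : (0 : V1) ∈ C1) (h2 : (0 : V2) ∈ C2) :
    (0 : V1 ⊗[ℝ] V2) ∈ minTensor C1 C2 :=
  minTensor_eq C1 C2 ▸ subset_convexHull ℝ _ ⟨0, h1, 0, h2, tmul_zero _ _⟩

lemma IsConeSet.image2_tmul (h1 : IsConeSet C1) : IsConeSet (image2 (· ⊗ₜ[ℝ] ·) C1 C2) := by
  rintro _ ⟨x, hx, y, hy, rfl⟩ a ha
  exact ⟨a • x, h1 x hx a ha, y, hy, (smul_tmul' a x y).symm⟩

lemma isConeSet_minTensor (h1 : IsConeSet C1) : IsConeSet (minTensor C1 C2) :=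
  minTensor_eq C1 C2 ▸ h1.image2_tmul.convexHull

lemma span_minTensor_eq_top (h1 : Submodule.span ℝ C1 = ⊤) (h2 : Submodule.span ℝ C2 = ⊤) :
    Submodule.span ℝ (minTensor C1 C2) = ⊤ :=
  eq_top_mono (Submodule.span_mono (minTensor_eq C1 C2 ▸ subset_convexHull ℝ _))
    (span_image2_tmul_eq_top h1 h2)

lemma convex_maxTensor (C1 : Set V1) (C2 : Set V2) : Convex ℝ (maxTensor C1 C2) := by
  intro z hz z' hz' a b ha hb _ f hf g hg
  rw [map_add, map_smul, map_smul]
  exact add_nonneg (smul_nonneg ha (hz f hf g hg)) (smul_nonneg hb (hz' f hf g hg))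

lemma isConeSet_maxTensor (C1 : Set V1) (C2 : Set V2) : IsConeSet (maxTensor C1 C2) := by
  intro z hz a ha f hf g hg
  rw [map_smul]
  exact smul_nonneg ha (hz f hf g hg)

lemma isClosedSet_maxTensor (C1 : Set V1) (C2 : Set V2) : IsClosedSet (maxTensor C1 C2) := by
  intro n e
  have himage : e '' maxTensor C1 C2 =
      ⋂ f ∈ dualCone C1, ⋂ g ∈ dualCone C2, {w | 0 ≤ (pairTensor f g ∘ₗ e.symm.toLinearMap) w} := by
    ext w
    simp only [mem_iInter]
    refine ⟨?_, fun hw => ⟨e.symm w, hw, e.apply_symm_apply w⟩⟩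
    rintro ⟨z, hz, rfl⟩ f hf g hg
    simpa using hz f hf g hg
  rw [himage]
  exact isClosed_biInter fun f _ => isClosed_biInter fun g _ =>
    isClosed_le continuous_const (LinearMap.continuous_of_finiteDimensional _)

lemma minTensor_subset_maxTensor : minTensor C1 C2 ⊆ maxTensor C1 C2 := by
  rw [minTensor_eq]
  refine convexHull_min ?_ (convex_maxTensor C1 C2)
  rintro _ ⟨x, hx, y, hy, rfl⟩ f hf g hg
  rw [pairTensor_tmul]
  exact mul_nonneg (hf x hx) (hg y hy)

lemma maxTensor_inter_neg_eq [FiniteDimensional ℝ V1] [FiniteDimensional ℝ V2]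
    (h1 : Submodule.span ℝ (dualCone C1) = ⊤) (h2 : Submodule.span ℝ (dualCone C2) = ⊤) :
    maxTensor C1 C2 ∩ -maxTensor C1 C2 = {0} := by
  refine subset_antisymm (fun z hz => ?_) ?_
  · refine eq_zero_of_forall_pairTensor_eq_zero h1 h2 fun f hf g hg => ?_
    have hneg := hz.2 f hf g hg
    rw [map_neg] at hneg
    linarith [hz.1 f hf g hg]
  · rintro _ rfl
    simp [maxTensor]

end Tensor

section Geometry

variable {E : Type*} [NormedAddCommGroup E] [NormedSpace ℝ E] [FiniteDimensional ℝ E]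

/-- A form of Carathéodory's theorem. -/
lemma convexHull_eq_iUnion_image_stdSimplex (K : Set E) :
    convexHull ℝ K = ⋃ k : Fin (finrank ℝ E + 2),
      (fun p : (Fin k → ℝ) × (Fin k → E) => ∑ i, p.1 i • p.2 i) ''
        (stdSimplex ℝ (Fin k) ×ˢ univ.pi fun _ => K) := by
  refine subset_antisymm (fun x hx => ?_) (iUnion_subset fun k => ?_)
  · obtain ⟨ι, _, z, w, hzK, hz, hw0, hw1, rfl⟩ := eq_pos_convex_span_of_mem_convexHull hx
    have hcard : Fintype.card ι < finrank ℝ E + 2 :=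
      Nat.lt_succ_of_le (hz.card_le_finrank_succ.trans
        (Nat.add_le_add_right (Submodule.finrank_le _) 1))
    let σ := (Fintype.equivFin ι).symm
    refine mem_iUnion.2 ⟨⟨_, hcard⟩, (w ∘ σ, z ∘ σ),
      ⟨⟨fun i => (hw0 _).le, ?_⟩, fun i _ => hzK (mem_range_self _)⟩, ?_⟩
    · simpa using σ.sum_comp w |>.trans hw1
    · exact σ.sum_comp fun i => w i • z i
  · rintro _ ⟨⟨w, z⟩, ⟨⟨hw0, hw1⟩, hz⟩, rfl⟩
    exact (convex_convexHull ℝ K).sum_mem (fun i _ => hw0 i) hw1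
      fun i _ => subset_convexHull ℝ K (hz i (mem_univ i))

lemma IsCompact.convexHull {K : Set E} (hK : IsCompact K) : IsCompact (convexHull ℝ K) := by
  rw [convexHull_eq_iUnion_image_stdSimplex]
  exact isCompact_iUnion fun k =>
    ((isCompact_stdSimplex ℝ _).prod (isCompact_univ_pi fun _ => hK)).image (by fun_prop)

lemma exists_pos_mul_norm_le {K : Set E} (hK : IsClosed K) (hC : IsConeSet K)
    {ψ : E →ₗ[ℝ] ℝ} (hψ : IsStrictlyPositiveOn ψ K) : ∃ m > 0, ∀ x ∈ K, m * ‖x‖ ≤ ψ x := by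
  obtain ⟨m, hm, hmψ⟩ := ((isCompact_sphere (0 : E) 1).inter_left hK).exists_forall_le'
    ψ.continuous_of_finiteDimensional.continuousOn
    fun u hu => hψ u hu.1 (ne_zero_of_mem_unit_sphere ⟨u, hu.2⟩)
  refine ⟨m, hm, fun x hx => ?_⟩
  rcases eq_or_ne x 0 with rfl | hx0
  · simp
  have hu : ‖x‖⁻¹ • x ∈ K ∩ Metric.sphere 0 1 :=
    ⟨hC x hx _ (by positivity), by simp [norm_smul, hx0]⟩
  have hmx := hmψ _ hu
  rw [map_smul, smul_eq_mul, le_inv_mul_iff₀ (norm_pos_iff.2 hx0), mul_comm] at hmx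
  exact hmx

lemma isCompact_inter_preimage_one {K : Set E} (hK : IsClosed K) (hC : IsConeSet K)
    {ψ : E →ₗ[ℝ] ℝ} (hψ : IsStrictlyPositiveOn ψ K) : IsCompact (K ∩ ψ ⁻¹' {1}) := by
  obtain ⟨m, hm, hmψ⟩ := exists_pos_mul_norm_le hK hC hψ
  refine (isCompact_closedBall (0 : E) m⁻¹).of_isClosed_subset
    (hK.inter (isClosed_singleton.preimage ψ.continuous_of_finiteDimensional)) ?_
  rintro x ⟨hx, hx1 : ψ x = 1⟩
  rw [mem_closedBall_zero_iff, ← one_div, le_div_iff₀' hm]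
  exact hx1 ▸ hmψ x hx

lemma isClosed_Ici_smul {P : Set E} (hP : IsCompact P) {H : E →ₗ[ℝ] ℝ}
    (hH : ∀ p ∈ P, H p = 1) : IsClosed (Ici (0 : ℝ) • P) := by
  have hHc := H.continuous_of_finiteDimensional
  refine closure_subset_iff_isClosed.1 fun x hx => ?_
  set c := H x + 1
  -- near `x`, the cone coincides with its compact slice `Icc 0 c • P`
  have hslice : {y | H y < c} ∩ Ici (0 : ℝ) • P ⊆ Icc 0 c • P := by
    rintro _ ⟨hlt, t, ht, p, hp, rfl⟩
    refine ⟨t, ⟨ht, ?_⟩, p, hp, rfl⟩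
    simpa [hH p hp] using (show H (t • p) < c from hlt).le
  have hx' : x ∈ closure (Icc 0 c • P) :=
    closure_mono hslice ((isOpen_lt hHc continuous_const).inter_closure
      ⟨show H x < c from lt_add_one _, hx⟩)
  rw [(isCompact_Icc.smul_set hP).isClosed.closure_eq] at hx'
  exact smul_subset_smul_right Icc_subset_Ici_self hx'

end Geometry

section Bilinear

variable {E₁ E₂ F : Type*} [NormedAddCommGroup E₁] [NormedSpace ℝ E₁] [FiniteDimensional ℝ E₁]
  [NormedAddCommGroup E₂] [NormedSpace ℝ E₂] [FiniteDimensional ℝ E₂]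
  [NormedAddCommGroup F] [NormedSpace ℝ F]

lemma LinearMap.continuous_uncurry_of_finiteDimensional (β : E₁ →ₗ[ℝ] E₂ →ₗ[ℝ] F) :
    Continuous fun p : E₁ × E₂ => β p.1 p.2 :=
  (LinearMap.toContinuousLinearMap
    (LinearMap.toContinuousLinearMap.toLinearMap ∘ₗ β)).continuous₂

lemma isClosed_convexHull_image2 [FiniteDimensional ℝ F] {K₁ : Set E₁} {K₂ : Set E₂}
    (hK₁ : IsClosed K₁) (hK₂ : IsClosed K₂) (hc₁ : IsConeSet K₁) (hc₂ : IsConeSet K₂) {ψ₁ : E₁ →ₗ[ℝ] ℝ} {ψ₂ : E₂ →ₗ[ℝ] ℝ}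
    (hψ₁ : IsStrictlyPositiveOn ψ₁ K₁) (hψ₂ : IsStrictlyPositiveOn ψ₂ K₂)
    (β : E₁ →ₗ[ℝ] E₂ →ₗ[ℝ] F) {H : F →ₗ[ℝ] ℝ} (hH : ∀ x y, H (β x y) = ψ₁ x * ψ₂ y) :
    IsClosed (convexHull ℝ (image2 (fun x y => β x y) K₁ K₂)) := by
  have hsub := image2_subset_insert_zero_Ici_smul hc₁ hc₂ hψ₁ hψ₂ β
  have hQ : IsCompact (image2 (fun x y => β x y) (K₁ ∩ ψ₁ ⁻¹' {1}) (K₂ ∩ ψ₂ ⁻¹' {1})) := by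
    rw [← image_prod]
    exact ((isCompact_inter_preimage_one hK₁ hc₁ hψ₁).prod
      (isCompact_inter_preimage_one hK₂ hc₂ hψ₂)).image
        β.continuous_uncurry_of_finiteDimensional
  set Q := image2 (fun x y => β x y) (K₁ ∩ ψ₁ ⁻¹' {1}) (K₂ ∩ ψ₂ ⁻¹' {1})
  rcases Q.eq_empty_or_nonempty with hQe | ⟨q, hq⟩
  · rw [hQe, smul_empty, insert_empty_eq] at hsub
    exact (subsingleton_singleton.anti (convexHull_min hsub (convex_singleton 0))).isClosed
  have heq : image2 (fun x y => β x y) K₁ K₂ = Ici (0 : ℝ) • Q := by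
    refine subset_antisymm (hsub.trans (insert_subset ⟨0, mem_Ici.2 le_rfl, q, hq, zero_smul ℝ q⟩
      subset_rfl)) ?_
    rintro _ ⟨t, ht, _, ⟨x, hx, y, hy, rfl⟩, rfl⟩
    exact ⟨t • x, hc₁ x hx.1 t ht, y, hy.1, by simp⟩
  have hHQ : Q ⊆ H ⁻¹' {1} := by
    rintro _ ⟨x, ⟨-, hx : ψ₁ x = 1⟩, y, ⟨-, hy : ψ₂ y = 1⟩, rfl⟩
    simp [hH, hx, hy]
  rw [heq, convexHull_Ici_smul]
  exact isClosed_Ici_smul hQ.convexHull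
    fun p hp => convexHull_min hHQ ((convex_singleton 1).linear_preimage H) hp

end Bilinear

lemma isClosedSet_minTensor {V1 V2 : Type*} [AddCommGroup V1] [Module ℝ V1]
    [FiniteDimensional ℝ V1] [AddCommGroup V2] [Module ℝ V2] [FiniteDimensional ℝ V2]
    {C1 : Set V1} {C2 : Set V2} (hC1 : IsClosedSet C1) (hC2 : IsClosedSet C2)
    (hc1 : IsConeSet C1) (hc2 : IsConeSet C2) {φ1 : Dual ℝ V1} {φ2 : Dual ℝ V2}
    (hφ1 : IsStrictlyPositiveOn φ1 C1) (hφ2 : IsStrictlyPositiveOn φ2 C2) :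
    IsClosedSet (minTensor C1 C2) := by
  intro n e
  let e1 := (finBasis ℝ V1).equivFun
  let e2 := (finBasis ℝ V2).equivFun
  let β := ((TensorProduct.mk ℝ V1 V2).compl₁₂ e1.symm.toLinearMap e2.symm.toLinearMap).compr₂
    e.toLinearMap
  have himage : e '' minTensor C1 C2 =
      convexHull ℝ (image2 (fun p q => β p q) (e1 '' C1) (e2 '' C2)) := by
    rw [minTensor_eq, ← LinearEquiv.coe_toLinearMap, LinearMap.image_convexHull, image_image2,
      image2_image_left, image2_image_right]
    simp [β]
  rw [himage]
  exact isClosed_convexHull_image2 (hC1 _ e1) (hC2 _ e2) (hc1.image e1) (hc2.image e2)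
    (hφ1.comp_symm e1) (hφ2.comp_symm e2) β (H := pairTensor φ1 φ2 ∘ₗ e.symm.toLinearMap)
    fun p q => by simp [β]

/-- If `C1` and `C2` are proper cones, then both their minimal and maximal tensor
products are proper cones. -/
theorem stmt3 {V1 V2 : Type*} [AddCommGroup V1] [Module ℝ V1] [FiniteDimensional ℝ V1]
    [AddCommGroup V2] [Module ℝ V2] [FiniteDimensional ℝ V2]
    (C1 : Set V1) (C2 : Set V2)
    (h1 : IsProperCone C1) (h2 : IsProperCone C2) :
    IsProperCone (minTensor C1 C2) ∧ IsProperCone (maxTensor C1 C2) := by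
  obtain ⟨hconv1, hclosed1, hcone1, hsal1, hgen1⟩ := h1
  obtain ⟨hconv2, hclosed2, hcone2, hsal2, hgen2⟩ := h2
  have hdual1 := span_dualCone_eq_top hconv1 hclosed1 hcone1 hsal1
  have hdual2 := span_dualCone_eq_top hconv2 hclosed2 hcone2 hsal2
  obtain ⟨φ1, hφ1⟩ := exists_isStrictlyPositiveOn hdual1
  obtain ⟨φ2, hφ2⟩ := exists_isStrictlyPositiveOn hdual2
  have hsalMax := maxTensor_inter_neg_eq hdual1 hdual2
  have hgenMin := span_minTensor_eq_top hgen1 hgen2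
  have h0Min := zero_mem_minTensor (zero_mem_of_inter_neg_eq hsal1) (zero_mem_of_inter_neg_eq hsal2)
  refine ⟨⟨minTensor_eq C1 C2 ▸ convex_convexHull ℝ _,
      isClosedSet_minTensor hclosed1 hclosed2 hcone1 hcone2 hφ1 hφ2, isConeSet_minTensor hcone1,
      inter_neg_eq_zero_of_subset minTensor_subset_maxTensor hsalMax h0Min, hgenMin⟩,
    convex_maxTensor C1 C2, isClosedSet_maxTensor C1 C2, isConeSet_maxTensor C1 C2, hsalMax,
    eq_top_mono (Submodule.span_mono minTensor_subset_maxTensor) hgenMin⟩
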